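/- arXiv:2012.12385 — 5 statements merged into one kernel-verified Lean document; each statement's English description precedes it below -/
import Mathlib

section
/- Let A, B, C be noncollinear points on a circle Γ in the Euclidean plane, let D be a point not on Γ and not on any of the lines BC, CA, AB, let r > 0, and write ι for the inversion with center D and radius r. Let A_p, B_p, C_p be the poles of the lines BC, CA, AB (i.e. A_p = ι(F) where F is the orthogonal projection of D onto line BC, and similarly for B_p, C_p), assume A_p, B_p, C_p are noncollinear, and let Γ_p be the circle through A_p, B_p, C_p. Let A₁ be a point of Γ with A₁ ≠ D; let B₁ᵖ and C₁ᵖ be two distinct points of Γ_p lying on the polar of A₁, each distinct from D; let C₁ be a point of Γ with C₁ ≠ A₁ lying on the polar of B₁ᵖ, and let B₁ be a point of Γ with B₁ ≠ A₁ lying on the polar of C₁ᵖ. Assume B₁ ≠ C₁ and D does not lie on the line B₁C₁. Then the pole of the line B₁C₁ (the point ι(F₁), where F₁ is the orthogonal projection of D onto line B₁C₁) lies on Γ_p. -/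
open EuclideanGeometry

noncomputable section

/-- The Euclidean plane. -/
abbrev Pt : Type := EuclideanSpace ℝ (Fin 2)

/-- The line (affine span) through two points. -/
def L (X Y : Pt) : AffineSubspace ℝ Pt := affineSpan ℝ {X, Y}

/-- `F` is the orthogonal projection (foot of the perpendicular) of `D` onto the line `XY`. -/
def IsFoot (D X Y F : Pt) : Prop := F ∈ L X Y ∧ (inner ℝ (D - F) (X - Y) : ℝ) = 0

/-- The inversion with center `D` and radius `r`. -/
def invPt (D : Pt) (r : ℝ) (X : Pt) : Pt := D + (r ^ 2 / ‖X - D‖ ^ 2) • (X - D)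

/-- The polar of a point `P ≠ D` w.r.t. the inversion circle of center `D`, radius `r`. -/
def polar (D : Pt) (r : ℝ) (P : Pt) : Set Pt := {X | (inner ℝ (X - invPt D r P) (P - D) : ℝ) = 0}

/-!
Relative to `D`, the pole of a line `XY` has homogeneous coordinates `(r² J(X - Y) : X × Y)`
(`J` the rotation by a right angle, `×` the cross product), so "the pole of `XY` lies on `Γp`" is
a quadratic equation in these coordinates. Parametrize `Γ` rationally from a point `E` of `Γ`;
the homogeneous pole of the chord `X(s) X(t)` is then `s - t` times an affine function of
`(s + t, s t)`, so the condition becomes `Q(s, t) = 0` for a symmetric biquadratic `Q`.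

If `Q` vanishes on the three sides `(a, b), (b, c), (c, a)` of a triangle, then
`(s - t) Q(s, t) = A(t) p(s) - A(s) p(t)` with `p(s) = (s - a)(s - b)(s - c)` and `A(s)` the
leading coefficient of `Q(s, ·)`. Hence for `s ≠ t`, `Q(s, t) = 0` iff `p(s) A(t) = p(t) A(s)`,
and the porism is the transitivity of this relation through the parameter of `A₁`. It needs
`A(A₁) ≠ 0`, i.e. that the pole of `A₁E` is not on `Γp`: otherwise `A₁E` would be a third line
through `A₁` whose pole lies on `Γp`, besides `A₁B₁` and `A₁C₁`.
-/

open scoped RealInnerProductSpace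

def quadPoly (a b c d e f x y : ℝ) : ℝ := a * x ^ 2 + b * x * y + c * y ^ 2 + d * x + e * y + f

/-- The triangle determines `d, e, f`; the certificate below is Cramer's rule for them. -/
theorem sub_mul_quadPoly_eq_of_triangle {a b c d e f x y z : ℝ}
    (hxy : x ≠ y) (hyz : y ≠ z) (hzx : z ≠ x)
    (h₁ : quadPoly a b c d e f (x + y) (x * y) = 0) (h₂ : quadPoly a b c d e f (y + z) (y * z) = 0)
    (h₃ : quadPoly a b c d e f (z + x) (z * x) = 0) (s t : ℝ) :
    (s - t) * quadPoly a b c d e f (s + t) (s * t) =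
      (a + b * t + c * t ^ 2) * ((s - x) * (s - y) * (s - z))
        - (a + b * s + c * s ^ 2) * ((t - x) * (t - y) * (t - z)) := by
  have hP : (x - y) * (y - z) * (z - x) ≠ 0 := by
    simp [sub_eq_zero, hxy, hyz, hzx]
  unfold quadPoly at *
  refine mul_left_cancel₀ hP ?_
  linear_combination (s - t) *
    ((s + t) * (-(z * (y - x)) * h₁ - x * (z - y) * h₂ - y * (x - z) * h₃)
    + s * t * ((y - x) * h₁ + (z - y) * h₂ + (x - z) * h₃)
    + (-(z ^ 2 * (x - y)) * h₁ - x ^ 2 * (y - z) * h₂ - y ^ 2 * (z - x) * h₃))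

theorem quadPoly_porism {a b c d e f x y z u v w : ℝ}
    (hxy : x ≠ y) (hyz : y ≠ z) (hzx : z ≠ x)
    (h₁ : quadPoly a b c d e f (x + y) (x * y) = 0) (h₂ : quadPoly a b c d e f (y + z) (y * z) = 0)
    (h₃ : quadPoly a b c d e f (z + x) (z * x) = 0)
    (hvw : v ≠ w) (hu : a + b * u + c * u ^ 2 ≠ 0)
    (huv : quadPoly a b c d e f (u + v) (u * v) = 0)
    (huw : quadPoly a b c d e f (u + w) (u * w) = 0) :
    quadPoly a b c d e f (v + w) (v * w) = 0 := by
  have key := sub_mul_quadPoly_eq_of_triangle hxy hyz hzx h₁ h₂ h₃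
  have kv := key u v
  have kw := key u w
  rw [huv, mul_zero] at kv
  rw [huw, mul_zero] at kw
  have h : (a + b * u + c * u ^ 2) * ((v - w) * quadPoly a b c d e f (v + w) (v * w)) = 0 := by
    linear_combination (a + b * u + c * u ^ 2) * key v w + (a + b * w + c * w ^ 2) * kv
      - (a + b * v + c * v ^ 2) * kw
  simpa [hu, sub_eq_zero, hvw] using h

section SymmBiquad

variable {V : Type*} [AddCommGroup V] [Module ℝ V] {B : LinearMap.BilinForm ℝ V}

def symmBiquad (B : LinearMap.BilinForm ℝ V) (h : Fin 3 → V) (s t : ℝ) : ℝ :=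
  B (h 0 + (s + t) • h 1 + (s * t) • h 2) (h 0 + (s + t) • h 1 + (s * t) • h 2)

theorem symmBiquad_eq_quadPoly (hB : B.IsSymm) (h : Fin 3 → V) (s t : ℝ) :
    symmBiquad B h s t = quadPoly (B (h 1) (h 1)) (2 * B (h 1) (h 2)) (B (h 2) (h 2))
      (2 * B (h 0) (h 1)) (2 * B (h 0) (h 2)) (B (h 0) (h 0)) (s + t) (s * t) := by
  simp only [symmBiquad, map_add, map_smul, LinearMap.add_apply, LinearMap.smul_apply, smul_eq_mul,
    hB.eq (h 1) (h 0), hB.eq (h 2) (h 0), hB.eq (h 2) (h 1), quadPoly]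
  ring

theorem symmBiquad_porism (hB : B.IsSymm) {h : Fin 3 → V} {x y z u v w : ℝ}
    (hxy : x ≠ y) (hyz : y ≠ z) (hzx : z ≠ x)
    (h₁ : symmBiquad B h x y = 0) (h₂ : symmBiquad B h y z = 0) (h₃ : symmBiquad B h z x = 0)
    (hvw : v ≠ w) (hu : B (h 1 + u • h 2) (h 1 + u • h 2) ≠ 0)
    (huv : symmBiquad B h u v = 0) (huw : symmBiquad B h u w = 0) :
    symmBiquad B h v w = 0 := by
  have hlead : B (h 1 + u • h 2) (h 1 + u • h 2) =
      B (h 1) (h 1) + 2 * B (h 1) (h 2) * u + B (h 2) (h 2) * u ^ 2 := by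
    simp only [map_add, map_smul, LinearMap.add_apply, LinearMap.smul_apply, smul_eq_mul,
      hB.eq (h 2) (h 1)]
    ring
  simp only [symmBiquad_eq_quadPoly hB] at *
  exact quadPoly_porism hxy hyz hzx h₁ h₂ h₃ hvw (hlead ▸ hu) huv huw

end SymmBiquad

def cross (x y : Pt) : ℝ := x 0 * y 1 - x 1 * y 0

def rot (x : Pt) : Pt := !₂[-x 1, x 0]

@[simp] theorem rot_apply_zero (x : Pt) : rot x 0 = -x 1 := rfl

@[simp] theorem rot_apply_one (x : Pt) : rot x 1 = x 0 := rfl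

theorem Pt.ext_coords {x y : Pt} (h₀ : x 0 = y 0) (h₁ : x 1 = y 1) : x = y := by
  ext i; fin_cases i <;> assumption

theorem inner_eq_coords (x y : Pt) : ⟪x, y⟫ = x 0 * y 0 + x 1 * y 1 := by
  simp [PiLp.inner_apply, Fin.sum_univ_two, mul_comm]

theorem norm_sq_eq_coords (x : Pt) : ‖x‖ ^ 2 = x 0 ^ 2 + x 1 ^ 2 := by
  rw [← real_inner_self_eq_norm_sq, inner_eq_coords]; ring

theorem norm_rot (x : Pt) : ‖rot x‖ = ‖x‖ := by
  rw [← sq_eq_sq₀ (norm_nonneg _) (norm_nonneg _), norm_sq_eq_coords, norm_sq_eq_coords,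
    rot_apply_zero, rot_apply_one]
  ring

theorem inner_rot (x y : Pt) : ⟪x, rot y⟫ = cross y x := by
  simp only [inner_eq_coords, cross, rot_apply_zero, rot_apply_one]; ring

theorem inner_rot_sub_left (x y : Pt) : ⟪rot (x - y), x⟫ = cross x y := by
  simp only [inner_eq_coords, cross, rot_apply_zero, rot_apply_one, PiLp.sub_apply]; ring

theorem inner_rot_sub_right (x y : Pt) : ⟪rot (x - y), y⟫ = cross x y := by
  simp only [inner_eq_coords, cross, rot_apply_zero, rot_apply_one, PiLp.sub_apply]; ring

theorem norm_sq_smul_eq (d v : Pt) : ‖v‖ ^ 2 • d = ⟪d, v⟫ • v + ⟪d, rot v⟫ • rot v := by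
  refine Pt.ext_coords ?_ ?_ <;>
  · simp only [norm_sq_eq_coords, inner_eq_coords, PiLp.add_apply, PiLp.smul_apply, smul_eq_mul,
      rot_apply_zero, rot_apply_one]
    ring

theorem eq_smul_rot_of_inner_eq_zero {d v : Pt} (hv : v ≠ 0) (h : ⟪d, v⟫ = 0) :
    d = (⟪d, rot v⟫ / ‖v‖ ^ 2) • rot v := by
  have := norm_sq_smul_eq d v
  rw [h, zero_smul, zero_add] at this
  rw [div_eq_inv_mul, mul_smul, ← this, inv_smul_smul₀ (by positivity)]

theorem eq_smul_of_cross_eq_zero {d v : Pt} (hv : v ≠ 0) (h : cross v d = 0) :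
    d = (⟪d, v⟫ / ‖v‖ ^ 2) • v := by
  have := norm_sq_smul_eq d v
  rw [inner_rot, h, zero_smul, add_zero] at this
  rw [div_eq_inv_mul, mul_smul, ← this, inv_smul_smul₀ (by positivity)]

theorem cross_sub_ne_zero_of_notMem {D X Y : Pt} (hXY : X ≠ Y) (hD : D ∉ L X Y) :
    cross (X - D) (Y - D) ≠ 0 := by
  intro hc
  have hXD : X - D ≠ 0 := by
    rintro h
    exact hD (sub_eq_zero.1 h ▸ left_mem_affineSpan_pair ℝ X Y)
  have hcol : Collinear ℝ ({X, Y, D} : Set Pt) := by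
    refine (collinear_iff_of_mem (p₀ := D) (by simp)).2 ⟨X - D, fun Z hZ => ?_⟩
    rcases hZ with rfl | rfl | rfl
    · exact ⟨1, by simp⟩
    · exact ⟨_, eq_add_of_sub_eq (eq_smul_of_cross_eq_zero hXD hc)⟩
    · exact ⟨0, by simp⟩
  exact hD (hcol.mem_affineSpan_of_mem_of_ne (by simp) (by simp) (by simp) hXY)

theorem eq_or_eq_or_eq_of_inner_eq {S : Sphere Pt} {D v P Q R : Pt} {k : ℝ} (hv : v ≠ 0)
    (hP : P ∈ S) (hQ : Q ∈ S) (hR : R ∈ S) (hPv : ⟪P - D, v⟫ = k) (hQv : ⟪Q - D, v⟫ = k)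
    (hRv : ⟪R - D, v⟫ = k) : P = Q ∨ P = R ∨ Q = R := by
  by_contra! hne
  obtain ⟨hPQ, hPR, hQR⟩ := hne
  have hind := (show Cospherical ({P, Q, R} : Set Pt) from
    ⟨S.center, S.radius, by simp [hP, hQ, hR]⟩).affineIndependent_of_ne hPQ hPR hQR
  refine affineIndependent_iff_not_collinear_set.1 hind
    ((collinear_iff_of_mem (Set.mem_insert P _)).2 ⟨rot v, fun X hX => ?_⟩)
  have hXk : ⟪X - D, v⟫ = k := by rcases hX with rfl | rfl | rfl <;> assumption
  have hXv : ⟪X - P, v⟫ = 0 := by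
    rw [← sub_sub_sub_cancel_right X P D, inner_sub_left, hXk, hPv, sub_self]
  exact ⟨_, eq_add_of_sub_eq (eq_smul_rot_of_inner_eq_zero hv hXv)⟩

theorem exists_param_of_inner_eq_norm_sq {d n : Pt} (hd : d ≠ 0) (h : ⟪d, n⟫ = ‖d‖ ^ 2) :
    ∃ s : ℝ, d = (1 + s ^ 2)⁻¹ • (n + s • rot n) := by
  have hβ : d 0 ^ 2 + d 1 ^ 2 ≠ 0 := by
    rw [← norm_sq_eq_coords]; exact pow_ne_zero 2 (norm_ne_zero_iff.mpr hd)
  rw [inner_eq_coords, norm_sq_eq_coords] at h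
  refine ⟨(d 1 * n 0 - d 0 * n 1) / (d 0 ^ 2 + d 1 ^ 2), ?_⟩
  rw [eq_inv_smul_iff₀ (by positivity)]
  refine Pt.ext_coords ?_ ?_ <;>
  simp only [PiLp.add_apply, PiLp.smul_apply, smul_eq_mul, rot_apply_zero, rot_apply_one] <;>
  field_simp
  · linear_combination
      ((d 0 ^ 2 + d 1 ^ 2) * n 0 - (d 0 ^ 2 + d 1 ^ 2 + d 0 * n 0 + d 1 * n 1) * d 0) * h
  · linear_combination
      ((d 0 ^ 2 + d 1 ^ 2) * n 1 - (d 0 ^ 2 + d 1 ^ 2 + d 0 * n 0 + d 1 * n 1) * d 1) * h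

theorem exists_param_of_mem_sphere {S : Sphere Pt} {E X : Pt} (hE : E ∈ S) (hX : X ∈ S)
    (hXE : X ≠ E) :
    ∃ s : ℝ, X - E = (1 + s ^ 2)⁻¹ •
      ((2 : ℝ) • (S.center - E) + s • rot ((2 : ℝ) • (S.center - E))) := by
  refine exists_param_of_inner_eq_norm_sq (sub_ne_zero.mpr hXE) ?_
  have h : ‖(X - E) - (S.center - E)‖ ^ 2 = ‖S.center - E‖ ^ 2 := by
    rw [sub_sub_sub_cancel_right, ← dist_eq_norm, ← dist_eq_norm, dist_comm S.center,
      dist_center_eq_dist_center_of_mem_sphere hX hE]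
  rw [norm_sub_sq_real] at h
  rw [inner_smul_right]
  linarith

theorem EuclideanGeometry.Sphere.exists_mem_notMem_finset {V : Type*} [NormedAddCommGroup V]
    [NormedSpace ℝ V] (hV : 1 < Module.rank ℝ V) {S : Sphere V} {A B : V} (hA : A ∈ S)
    (hB : B ∈ S) (hAB : A ≠ B) (s : Finset V) : ∃ E ∈ S, E ∉ s :=
  ((isPreconnected_sphere hV S.center S.radius).infinite_of_nontrivial
    ⟨A, hA, B, hB, hAB⟩).exists_notMem_finset s

theorem inner_invPt_sub {D F Z : Pt} (r : ℝ) (hF : F ≠ D) (hZ : ⟪F - D, Z - F⟫ = 0) :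
    ⟪invPt D r F - D, Z - D⟫ = r ^ 2 := by
  have hFD : ‖F - D‖ ^ 2 ≠ 0 := by simpa [sub_eq_zero] using hF
  rw [invPt, add_sub_cancel_left, real_inner_smul_left, ← sub_add_sub_cancel Z F D, inner_add_right,
    hZ, zero_add, real_inner_self_eq_norm_sq, div_mul_cancel₀ _ hFD]

theorem inner_sub_of_mem_polar {D P X : Pt} {r : ℝ} (hP : P ≠ D) (hX : X ∈ polar D r P) :
    ⟪X - D, P - D⟫ = r ^ 2 := by
  rw [← sub_add_sub_cancel X (invPt D r P) D, inner_add_left, hX, zero_add,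
    inner_invPt_sub r hP (by simp)]

theorem inner_invPt_sub_of_isFoot {D X Y F : Pt} (r : ℝ) (hD : D ∉ L X Y) (hF : IsFoot D X Y F) :
    ⟪invPt D r F - D, X - D⟫ = r ^ 2 ∧ ⟪invPt D r F - D, Y - D⟫ = r ^ 2 := by
  obtain ⟨hFL, hperp⟩ := hF
  have hFD : F ≠ D := fun h => hD (h ▸ hFL)
  have hperp' : ∀ Z ∈ L X Y, ⟪F - D, Z - F⟫ = 0 := by
    intro Z hZ
    have hdir : Z - F ∈ (L X Y).direction := AffineSubspace.vsub_mem_direction hZ hFL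
    rw [L, direction_affineSpan, vectorSpan_pair, Submodule.mem_span_singleton] at hdir
    obtain ⟨a, ha⟩ := hdir
    rw [← ha, vsub_eq_sub, real_inner_smul_right, ← neg_sub D F, inner_neg_left, hperp, neg_zero,
      mul_zero]
  exact ⟨inner_invPt_sub r hFD (hperp' X (left_mem_affineSpan_pair ℝ X Y)),
    inner_invPt_sub r hFD (hperp' Y (right_mem_affineSpan_pair ℝ X Y))⟩

/-- Homogeneous coordinates of the pole of the line `xy` with respect to the circle
`‖p‖ ^ 2 = k` (see `chordCoords_eq_smul`). -/
def chordCoords (k : ℝ) (x y : Pt) : Pt × ℝ := (k • rot (x - y), cross x y)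

/-- The equation `‖p - w‖ ^ 2 = R ^ 2` of a circle, homogenized (see `circleForm_apply_one`). -/
def circleForm (w : Pt) (R : ℝ) : LinearMap.BilinForm ℝ (Pt × ℝ) :=
  LinearMap.mk₂ ℝ (fun p q => ⟪p.1 - p.2 • w, q.1 - q.2 • w⟫ - R ^ 2 * p.2 * q.2)
    (fun p p' q => by
      simp only [Prod.fst_add, Prod.snd_add, add_smul, inner_sub_left, inner_add_left]; ring)
    (fun c p q => by
      simp only [Prod.smul_fst, Prod.smul_snd, smul_eq_mul, mul_smul, ← smul_sub,
        real_inner_smul_left]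
      ring)
    (fun p q q' => by
      simp only [Prod.fst_add, Prod.snd_add, add_smul, inner_sub_right, inner_add_right]; ring)
    (fun c p q => by
      simp only [Prod.smul_fst, Prod.smul_snd, smul_eq_mul, mul_smul, ← smul_sub,
        real_inner_smul_right]
      ring)

theorem circleForm_apply (w : Pt) (R : ℝ) (p q : Pt × ℝ) :
    circleForm w R p q = ⟪p.1 - p.2 • w, q.1 - q.2 • w⟫ - R ^ 2 * p.2 * q.2 := rfl

theorem circleForm_isSymm (w : Pt) (R : ℝ) : (circleForm w R).IsSymm :=
  ⟨fun p q => by simp only [circleForm_apply, real_inner_comm]; ring⟩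

theorem circleForm_apply_one (w : Pt) (R : ℝ) (p : Pt) :
    circleForm w R (p, 1) (p, 1) = ‖p - w‖ ^ 2 - R ^ 2 := by
  simp [circleForm_apply]

theorem chordCoords_eq_smul {k : ℝ} {p x y : Pt} (hx : ⟪p, x⟫ = k) (hy : ⟪p, y⟫ = k) :
    chordCoords k x y = cross x y • (p, 1) := by
  rw [inner_eq_coords] at hx hy
  refine Prod.ext (Pt.ext_coords ?_ ?_) ?_ <;>
  simp only [chordCoords, cross, rot_apply_zero, rot_apply_one, PiLp.sub_apply, PiLp.smul_apply,
    Prod.smul_fst, Prod.smul_snd, smul_eq_mul, mul_one]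
  · linear_combination (-(y 1)) * hx + x 1 * hy
  · linear_combination y 0 * hx - x 0 * hy

/-- Vanishes iff the pole of the line `XY` for the inversion of center `D` and power `k` lies on
`S`, when `D ∉ XY` (`poleForm_eq_of_inner`). -/
def poleForm (D : Pt) (k : ℝ) (S : Sphere Pt) (X Y : Pt) : ℝ :=
  circleForm (S.center - D) S.radius (chordCoords k (X - D) (Y - D)) (chordCoords k (X - D) (Y - D))

theorem poleForm_eq_of_inner {D P X Y : Pt} {k : ℝ} (S : Sphere Pt) (hX : ⟪P - D, X - D⟫ = k)
    (hY : ⟪P - D, Y - D⟫ = k) :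
    poleForm D k S X Y = cross (X - D) (Y - D) ^ 2 * (dist P S.center ^ 2 - S.radius ^ 2) := by
  simp only [poleForm, chordCoords_eq_smul hX hY, map_smul, LinearMap.smul_apply, smul_eq_mul,
    circleForm_apply_one, sub_sub_sub_cancel_right, dist_eq_norm]
  ring

theorem poleForm_eq_zero_of_inner {S : Sphere Pt} {D P X Y : Pt} {k : ℝ} (hP : P ∈ S)
    (hX : ⟪P - D, X - D⟫ = k) (hY : ⟪P - D, Y - D⟫ = k) : poleForm D k S X Y = 0 := by
  rw [poleForm_eq_of_inner S hX hY, mem_sphere.1 hP, sub_self, mul_zero]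

theorem mem_of_poleForm_eq_zero {S : Sphere Pt} {D P X Y : Pt} {k : ℝ} (hS : 0 ≤ S.radius)
    (hXY : cross (X - D) (Y - D) ≠ 0) (hX : ⟪P - D, X - D⟫ = k) (hY : ⟪P - D, Y - D⟫ = k)
    (h : poleForm D k S X Y = 0) : P ∈ S := by
  rw [poleForm_eq_of_inner S hX hY] at h
  have h' : dist P S.center ^ 2 = S.radius ^ 2 := by
    simpa [hXY, sub_eq_zero] using h
  exact mem_sphere.2 ((sq_eq_sq₀ dist_nonneg hS).1 h')

theorem exists_pole_of_poleForm_eq_zero {S : Sphere Pt} {D X Y : Pt} {k : ℝ} (hk : k ≠ 0)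
    (hXY : X ≠ Y) (hS : 0 ≤ S.radius) (h : poleForm D k S X Y = 0) :
    ∃ P ∈ S, ⟪P - D, X - D⟫ = k ∧ ⟪P - D, Y - D⟫ = k := by
  by_cases hc : cross (X - D) (Y - D) = 0
  · refine absurd h ?_
    rw [poleForm, circleForm_apply]
    simp only [chordCoords, hc, zero_smul, sub_zero, mul_zero, real_inner_self_eq_norm_sq,
      norm_smul, sub_sub_sub_cancel_right]
    simp [norm_rot, hk, sub_eq_zero, hXY]
  set P := D + (k / cross (X - D) (Y - D)) • rot ((X - D) - (Y - D))
  have hX : ⟪P - D, X - D⟫ = k := by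
    rw [add_sub_cancel_left, real_inner_smul_left, inner_rot_sub_left, div_mul_cancel₀ _ hc]
  have hY : ⟪P - D, Y - D⟫ = k := by
    rw [add_sub_cancel_left, real_inner_smul_left, inner_rot_sub_right, div_mul_cancel₀ _ hc]
  exact ⟨P, mem_of_poleForm_eq_zero hS hc hX hY h, hX, hY⟩

theorem poleForm_ne_zero_of_tangent_poles {Γ S : Sphere Pt} {D A₁ B₁ C₁ E P Q : Pt} {k : ℝ}
    (hk : k ≠ 0) (hA₁ : A₁ ∈ Γ) (hB₁ : B₁ ∈ Γ) (hC₁ : C₁ ∈ Γ) (hE : E ∈ Γ)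
    (hA₁E : A₁ ≠ E) (hB₁E : B₁ ≠ E) (hC₁E : C₁ ≠ E) (hB₁A₁ : B₁ ≠ A₁) (hC₁A₁ : C₁ ≠ A₁)
    (hP : P ∈ S) (hQ : Q ∈ S) (hPQ : P ≠ Q)
    (hPA₁ : ⟪P - D, A₁ - D⟫ = k) (hPC₁ : ⟪P - D, C₁ - D⟫ = k)
    (hQA₁ : ⟪Q - D, A₁ - D⟫ = k) (hQB₁ : ⟪Q - D, B₁ - D⟫ = k) :
    poleForm D k S A₁ E ≠ 0 := by
  intro h
  obtain ⟨T, hT, hTA₁, hTE⟩ :=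
    exists_pole_of_poleForm_eq_zero hk hA₁E (Sphere.radius_nonneg_of_mem hP) h
  have hne : ∀ {U V : Pt}, ⟪U - D, V - D⟫ = k → U - D ≠ 0 := by
    rintro U V hUV hU
    rw [hU, inner_zero_left] at hUV
    exact hk hUV.symm
  have hcomm : ∀ {U V : Pt}, ⟪U - D, V - D⟫ = k → ⟪V - D, U - D⟫ = k := by
    intro U V hUV
    rwa [real_inner_comm]
  -- The pole `T` of `A₁E`, like `P ≠ Q`, is on `S` and on the polar of `A₁`; a line meets `S`
  -- at most twice.
  rcases eq_or_eq_or_eq_of_inner_eq (hne (hcomm hPA₁)) hT hP hQ hTA₁ hPA₁ hQA₁ with rfl | rfl | hPQ'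
  · rcases eq_or_eq_or_eq_of_inner_eq (hne hPA₁) hA₁ hC₁ hE (hcomm hPA₁) (hcomm hPC₁) (hcomm hTE)
      with h' | h' | h'
    exacts [hC₁A₁ h'.symm, hA₁E h', hC₁E h']
  · rcases eq_or_eq_or_eq_of_inner_eq (hne hQA₁) hA₁ hB₁ hE (hcomm hQA₁) (hcomm hQB₁) (hcomm hTE)
      with h' | h' | h'
    exacts [hB₁A₁ h'.symm, hA₁E h', hB₁E h']
  · exact hPQ hPQ'

def chordPencil (k : ℝ) (e n : Pt) : Fin 3 → Pt × ℝ :=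
  ![(-(k • n), -cross e (rot n) - ‖n‖ ^ 2), (-(k • rot n), cross e n), (k • n, cross e (rot n))]

theorem smul_chordCoords_of_param {k s t : ℝ} {e n x y : Pt}
    (hx : x - e = (1 + s ^ 2)⁻¹ • (n + s • rot n)) (hy : y - e = (1 + t ^ 2)⁻¹ • (n + t • rot n)) :
    ((1 + s ^ 2) * (1 + t ^ 2)) • chordCoords k x y =
      (s - t) • (chordPencil k e n 0 + (s + t) • chordPencil k e n 1
        + (s * t) • chordPencil k e n 2) := by
  obtain rfl := eq_add_of_sub_eq' hx
  obtain rfl := eq_add_of_sub_eq' hy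
  have hs : (1 + s ^ 2) ≠ 0 := by positivity
  have ht : (1 + t ^ 2) ≠ 0 := by positivity
  refine Prod.ext (Pt.ext_coords ?_ ?_) ?_ <;>
  simp [chordCoords, chordPencil, cross, norm_sq_eq_coords] <;>
  field_simp <;>
  ring

/-- The chord towards `E` is the limit `t → ∞`: it carries the leading coefficient in `t`. -/
theorem smul_chordCoords_self_of_param {k u : ℝ} {e n x : Pt}
    (hx : x - e = (1 + u ^ 2)⁻¹ • (n + u • rot n)) :
    (1 + u ^ 2) • chordCoords k x e = -(chordPencil k e n 1 + u • chordPencil k e n 2) := by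
  obtain rfl := eq_add_of_sub_eq' hx
  have hu : (1 + u ^ 2) ≠ 0 := by positivity
  refine Prod.ext (Pt.ext_coords ?_ ?_) ?_ <;>
  simp [chordCoords, chordPencil, cross] <;>
  field_simp <;>
  ring

theorem sq_mul_poleForm_of_param {D E n X Y : Pt} {k s t : ℝ} (S : Sphere Pt)
    (hX : X - E = (1 + s ^ 2)⁻¹ • (n + s • rot n)) (hY : Y - E = (1 + t ^ 2)⁻¹ • (n + t • rot n)) :
    ((1 + s ^ 2) * (1 + t ^ 2)) ^ 2 * poleForm D k S X Y =
      (s - t) ^ 2 *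
        symmBiquad (circleForm (S.center - D) S.radius) (chordPencil k (E - D) n) s t := by
  rw [← sub_sub_sub_cancel_right X E D] at hX
  rw [← sub_sub_sub_cancel_right Y E D] at hY
  have h := congrArg (fun p => circleForm (S.center - D) S.radius p p)
    (smul_chordCoords_of_param (k := k) hX hY)
  simp only [map_smul, LinearMap.smul_apply, smul_eq_mul] at h
  rw [poleForm, symmBiquad]
  linear_combination h

theorem sq_mul_poleForm_self_of_param {D E n X : Pt} {k u : ℝ} (S : Sphere Pt)
    (hX : X - E = (1 + u ^ 2)⁻¹ • (n + u • rot n)) :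
    (1 + u ^ 2) ^ 2 * poleForm D k S X E =
      circleForm (S.center - D) S.radius
        (chordPencil k (E - D) n 1 + u • chordPencil k (E - D) n 2)
        (chordPencil k (E - D) n 1 + u • chordPencil k (E - D) n 2) := by
  rw [← sub_sub_sub_cancel_right X E D] at hX
  have h := congrArg (fun p => circleForm (S.center - D) S.radius p p)
    (smul_chordCoords_self_of_param (k := k) hX)
  simp only [map_smul, map_neg, LinearMap.smul_apply, LinearMap.neg_apply, smul_eq_mul,
    neg_neg] at h
  rw [poleForm]
  linear_combination h

theorem poleForm_porism {Γ S : Sphere Pt} {D E A B C X Y Z : Pt} {k : ℝ}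
    (hE : E ∈ Γ) (hA : A ∈ Γ) (hB : B ∈ Γ) (hC : C ∈ Γ) (hX : X ∈ Γ) (hY : Y ∈ Γ) (hZ : Z ∈ Γ)
    (hAE : A ≠ E) (hBE : B ≠ E) (hCE : C ≠ E) (hXE : X ≠ E) (hYE : Y ≠ E) (hZE : Z ≠ E)
    (hAB : A ≠ B) (hBC : B ≠ C) (hCA : C ≠ A) (hXY : X ≠ Y) (hXZ : X ≠ Z) (hYZ : Y ≠ Z)
    (hAB₀ : poleForm D k S A B = 0) (hBC₀ : poleForm D k S B C = 0)
    (hCA₀ : poleForm D k S C A = 0) (hXY₀ : poleForm D k S X Y = 0)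
    (hXZ₀ : poleForm D k S X Z = 0) (hXE₀ : poleForm D k S X E ≠ 0) :
    poleForm D k S Y Z = 0 := by
  set n := (2 : ℝ) • (Γ.center - E)
  have hpos : ∀ s : ℝ, 1 + s ^ 2 ≠ 0 := fun s => by positivity
  have hne : ∀ {P Q : Pt} {s t : ℝ}, P - E = (1 + s ^ 2)⁻¹ • (n + s • rot n) →
      Q - E = (1 + t ^ 2)⁻¹ • (n + t • rot n) → P ≠ Q → s ≠ t := by
    rintro P Q s t hP hQ hPQ rfl
    exact hPQ (sub_left_injective (hP.trans hQ.symm))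
  have hvanish : ∀ {P Q : Pt} {s t : ℝ}, P - E = (1 + s ^ 2)⁻¹ • (n + s • rot n) →
      Q - E = (1 + t ^ 2)⁻¹ • (n + t • rot n) → P ≠ Q → poleForm D k S P Q = 0 →
      symmBiquad (circleForm (S.center - D) S.radius) (chordPencil k (E - D) n) s t = 0 := by
    intro P Q s t hP hQ hPQ h
    have := sq_mul_poleForm_of_param (k := k) (D := D) S hP hQ
    rw [h, mul_zero, eq_comm] at this
    simpa [sub_eq_zero, hne hP hQ hPQ] using this
  obtain ⟨a, ha⟩ := exists_param_of_mem_sphere hE hA hAE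
  obtain ⟨b, hb⟩ := exists_param_of_mem_sphere hE hB hBE
  obtain ⟨c, hc⟩ := exists_param_of_mem_sphere hE hC hCE
  obtain ⟨x, hx⟩ := exists_param_of_mem_sphere hE hX hXE
  obtain ⟨y, hy⟩ := exists_param_of_mem_sphere hE hY hYE
  obtain ⟨z, hz⟩ := exists_param_of_mem_sphere hE hZ hZE
  have hyz := symmBiquad_porism (circleForm_isSymm _ _) (hne ha hb hAB) (hne hb hc hBC)
    (hne hc ha hCA) (hvanish ha hb hAB hAB₀) (hvanish hb hc hBC hBC₀) (hvanish hc ha hCA hCA₀)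
    (hne hy hz hYZ) (u := x)
    (by rw [← sq_mul_poleForm_self_of_param S hx]; exact mul_ne_zero (pow_ne_zero 2 (hpos x)) hXE₀)
    (hvanish hx hy hXY hXY₀) (hvanish hx hz hXZ hXZ₀)
  have := sq_mul_poleForm_of_param (k := k) (D := D) S hy hz
  rw [hyz, mul_zero] at this
  simpa [hpos] using this

theorem polar_porism_general
    (Γ Γp : EuclideanGeometry.Sphere Pt) (A B C D : Pt) (r : ℝ) (hr : 0 < r)
    (hABC : ¬ Collinear ℝ ({A, B, C} : Set Pt))
    (hA : A ∈ Γ) (hB : B ∈ Γ) (hC : C ∈ Γ)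
    (hDa : D ∉ L B C) (hDb : D ∉ L C A) (hDc : D ∉ L A B)
    (Fa Fb Fc Ap Bp Cp : Pt)
    (hFa : IsFoot D B C Fa) (hFb : IsFoot D C A Fb) (hFc : IsFoot D A B Fc)
    (hAp : Ap = invPt D r Fa) (hBp : Bp = invPt D r Fb) (hCp : Cp = invPt D r Fc)
    (hApΓ : Ap ∈ Γp) (hBpΓ : Bp ∈ Γp) (hCpΓ : Cp ∈ Γp)
    (A₁ B₁p C₁p C₁ B₁ : Pt)
    (hA₁ : A₁ ∈ Γ) (hA₁D : A₁ ≠ D)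
    (hB₁p : B₁p ∈ Γp) (hC₁p : C₁p ∈ Γp) (hne : B₁p ≠ C₁p)
    (hB₁pD : B₁p ≠ D) (hC₁pD : C₁p ≠ D)
    (hB₁pPol : B₁p ∈ polar D r A₁) (hC₁pPol : C₁p ∈ polar D r A₁)
    (hC₁ : C₁ ∈ Γ) (hC₁A₁ : C₁ ≠ A₁) (hC₁Pol : C₁ ∈ polar D r B₁p)
    (hB₁ : B₁ ∈ Γ) (hB₁A₁ : B₁ ≠ A₁) (hB₁Pol : B₁ ∈ polar D r C₁p)
    (hB₁C₁ : B₁ ≠ C₁) (hDl : D ∉ L B₁ C₁)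
    (F₁ : Pt) (hF₁ : IsFoot D B₁ C₁ F₁) :
    invPt D r F₁ ∈ Γp := by
  have hAB : A ≠ B := by rintro rfl; exact hABC (by simpa using collinear_pair ℝ A C)
  have hBC : B ≠ C := by rintro rfl; exact hABC (by simpa using collinear_pair ℝ A B)
  have hCA : C ≠ A := by rintro rfl; exact hABC (by simpa using collinear_pair ℝ B C)
  obtain ⟨hApB, hApC⟩ := inner_invPt_sub_of_isFoot r hDa hFa
  obtain ⟨hBpC, hBpA⟩ := inner_invPt_sub_of_isFoot r hDb hFb
  obtain ⟨hCpA, hCpB⟩ := inner_invPt_sub_of_isFoot r hDc hFc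
  subst hAp hBp hCp
  have hB₁pA₁ := inner_sub_of_mem_polar hA₁D hB₁pPol
  have hC₁pA₁ := inner_sub_of_mem_polar hA₁D hC₁pPol
  have hB₁pC₁ := (real_inner_comm _ _).trans (inner_sub_of_mem_polar hB₁pD hC₁Pol)
  have hC₁pB₁ := (real_inner_comm _ _).trans (inner_sub_of_mem_polar hC₁pD hB₁Pol)
  -- `E` is the base point of the rational parametrization of `Γ`, so it avoids the six points.
  obtain ⟨E, hE, hEs⟩ := Sphere.exists_mem_notMem_finset
    (by rw [← Module.finrank_eq_rank, finrank_euclideanSpace_fin]; norm_num) hA hB hAB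
    {A, B, C, A₁, B₁, C₁}
  simp only [Finset.mem_insert, Finset.mem_singleton, not_or] at hEs
  obtain ⟨hEA, hEB, hEC, hEA₁, hEB₁, hEC₁⟩ := hEs
  have hA₁E := poleForm_ne_zero_of_tangent_poles (by positivity) hA₁ hB₁ hC₁ hE (Ne.symm hEA₁)
    (Ne.symm hEB₁) (Ne.symm hEC₁) hB₁A₁ hC₁A₁ hB₁p hC₁p hne hB₁pA₁ hB₁pC₁ hC₁pA₁ hC₁pB₁
  have hpole := poleForm_porism hE hA hB hC hA₁ hB₁ hC₁ (Ne.symm hEA) (Ne.symm hEB) (Ne.symm hEC)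
    (Ne.symm hEA₁) (Ne.symm hEB₁) (Ne.symm hEC₁) hAB hBC hCA hB₁A₁.symm hC₁A₁.symm hB₁C₁
    (poleForm_eq_zero_of_inner hCpΓ hCpA hCpB) (poleForm_eq_zero_of_inner hApΓ hApB hApC)
    (poleForm_eq_zero_of_inner hBpΓ hBpC hBpA) (poleForm_eq_zero_of_inner hC₁p hC₁pA₁ hC₁pB₁)
    (poleForm_eq_zero_of_inner hB₁p hB₁pA₁ hB₁pC₁) hA₁E
  obtain ⟨hF₁B, hF₁C⟩ := inner_invPt_sub_of_isFoot r hDl hF₁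
  exact mem_of_poleForm_eq_zero (Sphere.radius_nonneg_of_mem hB₁p)
    (cross_sub_ne_zero_of_notMem hB₁C₁ hDl) hF₁B hF₁C hpole

/-- **Polar porism** (Proposition 3.1 ii): the pole of the line `B₁C₁` lies on the
circumcircle `Γp` of the polar triangle. -/
theorem polar_porism
    (Γ Γp : EuclideanGeometry.Sphere Pt) (A B C D : Pt) (r : ℝ) (hr : 0 < r)
    (hABC : ¬ Collinear ℝ ({A, B, C} : Set Pt))
    (hA : A ∈ Γ) (hB : B ∈ Γ) (hC : C ∈ Γ) (hD : D ∉ Γ)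
    (hDa : D ∉ L B C) (hDb : D ∉ L C A) (hDc : D ∉ L A B)
    (Fa Fb Fc Ap Bp Cp : Pt)
    (hFa : IsFoot D B C Fa) (hFb : IsFoot D C A Fb) (hFc : IsFoot D A B Fc)
    (hAp : Ap = invPt D r Fa) (hBp : Bp = invPt D r Fb) (hCp : Cp = invPt D r Fc)
    (hpnc : ¬ Collinear ℝ ({Ap, Bp, Cp} : Set Pt))
    (hApΓ : Ap ∈ Γp) (hBpΓ : Bp ∈ Γp) (hCpΓ : Cp ∈ Γp)
    (A₁ B₁p C₁p C₁ B₁ : Pt)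
    (hA₁ : A₁ ∈ Γ) (hA₁D : A₁ ≠ D)
    (hB₁p : B₁p ∈ Γp) (hC₁p : C₁p ∈ Γp) (hne : B₁p ≠ C₁p)
    (hB₁pD : B₁p ≠ D) (hC₁pD : C₁p ≠ D)
    (hB₁pPol : B₁p ∈ polar D r A₁) (hC₁pPol : C₁p ∈ polar D r A₁)
    (hC₁ : C₁ ∈ Γ) (hC₁A₁ : C₁ ≠ A₁) (hC₁Pol : C₁ ∈ polar D r B₁p)
    (hB₁ : B₁ ∈ Γ) (hB₁A₁ : B₁ ≠ A₁) (hB₁Pol : B₁ ∈ polar D r C₁p)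
    (hB₁C₁ : B₁ ≠ C₁) (hDl : D ∉ L B₁ C₁)
    (F₁ : Pt) (hF₁ : IsFoot D B₁ C₁ F₁) :
    invPt D r F₁ ∈ Γp :=
  polar_porism_general Γ Γp A B C D r hr hABC hA hB hC hDa hDb hDc Fa Fb Fc Ap Bp Cp hFa hFb hFc hAp
    hBp hCp hApΓ hBpΓ hCpΓ A₁ B₁p C₁p C₁ B₁ hA₁ hA₁D hB₁p hC₁p hne hB₁pD hC₁pD hB₁pPol hC₁pPol hC₁
    hC₁A₁ hC₁Pol hB₁ hB₁A₁ hB₁Pol hB₁C₁ hDl F₁ hF₁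
end
end

section
/- Let A, B, C be noncollinear points in the Euclidean plane and let D be a point with D ∉ {A, B, C} and D not on any of the lines BC, CA, AB. Let A', B', C' be pairwise distinct points satisfying ⟪A' − B, B − D⟫ = 0, ⟪A' − C, C − D⟫ = 0, ⟪B' − C, C − D⟫ = 0, ⟪B' − A, A − D⟫ = 0, ⟪C' − A, A − D⟫ = 0, ⟪C' − B, B − D⟫ = 0 (so that A'B'C' is the negative-pedal triangle of ABC with respect to D). Then the orthogonal projection of D onto the line B'C' is A, the orthogonal projection of D onto the line C'A' is B, and the orthogonal projection of D onto the line A'B' is C. Consequently, the pedal circle of the triangle A'B'C' with respect to D is the circumcircle of ABC. -/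
/-! Each vertex of `ABC`, say `A`, together with the two vertices `B'`, `C'` of the negative-pedal
triangle opposite to it, lies on the line through `A` perpendicular to `DA`. In the plane that
line is `B'C'` (as `B' ≠ C'`), so `A` is the foot of the perpendicular from `D` to `B'C'`. -/

open EuclideanGeometry

noncomputable section

open Module
open scoped InnerProductSpace

theorem mem_affineSpan_pair_of_inner_vsub_vsub_eq_zero {V P : Type*} [NormedAddCommGroup V]
    [InnerProductSpace ℝ V] [Fact (finrank ℝ V = 2)] [MetricSpace P] [NormedAddTorsor V P]
    {D F X Y : P} (hF : F ≠ D) (hXY : X ≠ Y)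
    (hX : ⟪X -ᵥ F, F -ᵥ D⟫_ℝ = 0) (hY : ⟪Y -ᵥ F, F -ᵥ D⟫_ℝ = 0) :
    F ∈ line[ℝ, X, Y] := by
  have hYX : ⟪F -ᵥ D, Y -ᵥ X⟫_ℝ = 0 := by
    rw [← vsub_sub_vsub_cancel_right Y X F, inner_sub_right, real_inner_comm, hY,
      real_inner_comm, hX, sub_zero]
  have hFX : ⟪F -ᵥ D, F -ᵥ X⟫_ℝ = 0 := by
    rw [← neg_vsub_eq_vsub_rev X F, inner_neg_right, real_inner_comm, hX, neg_zero]
  obtain ⟨r, hr⟩ := Submodule.mem_span_singleton.mp <|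
    Submodule.mem_span_singleton_of_inner_eq_zero_of_inner_eq_zero (vsub_ne_zero.mpr hF)
      (vsub_ne_zero.mpr hXY.symm) hFX hYX
  rw [← vsub_vadd F X]
  exact vadd_left_mem_affineSpan_pair.mpr ⟨r, hr⟩

theorem isFoot_of_inner_eq_zero {D F X Y : Pt} (hF : F ≠ D) (hXY : X ≠ Y)
    (hX : ⟪X - F, F - D⟫_ℝ = 0) (hY : ⟪Y - F, F - D⟫_ℝ = 0) : IsFoot D X Y F := by
  have : Fact (finrank ℝ Pt = 2) := ⟨finrank_euclideanSpace_fin⟩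
  refine ⟨mem_affineSpan_pair_of_inner_vsub_vsub_eq_zero hF hXY hX hY, ?_⟩
  rw [← sub_sub_sub_cancel_right X Y F, ← neg_sub F D, inner_neg_left, inner_sub_right,
    real_inner_comm, hX, real_inner_comm, hY, sub_zero, neg_zero]

theorem negative_pedal_triangle_feet_general
    (A B C D A' B' C' : Pt)
    (hDv : D ∉ ({A, B, C} : Set Pt))
    (hd1 : A' ≠ B') (hd2 : B' ≠ C') (hd3 : A' ≠ C')
    (h1 : (inner ℝ (A' - B) (B - D) : ℝ) = 0) (h2 : (inner ℝ (A' - C) (C - D) : ℝ) = 0)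
    (h3 : (inner ℝ (B' - C) (C - D) : ℝ) = 0) (h4 : (inner ℝ (B' - A) (A - D) : ℝ) = 0)
    (h5 : (inner ℝ (C' - A) (A - D) : ℝ) = 0) (h6 : (inner ℝ (C' - B) (B - D) : ℝ) = 0) :
    IsFoot D B' C' A ∧ IsFoot D C' A' B ∧ IsFoot D A' B' C := by
  simp only [Set.mem_insert_iff, Set.mem_singleton_iff, not_or] at hDv
  obtain ⟨hDA, hDB, hDC⟩ := hDv
  exact ⟨isFoot_of_inner_eq_zero (Ne.symm hDA) hd2 h4 h5,
    isFoot_of_inner_eq_zero (Ne.symm hDB) hd3.symm h6 h1,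
    isFoot_of_inner_eq_zero (Ne.symm hDC) hd1 h2 h3⟩

/-- **Proposition 4.2**: the orthogonal projections of `D` onto the sides of the
negative-pedal triangle `A'B'C'` of `ABC` w.r.t. `D` are the vertices `A`, `B`, `C`;
hence the pedal circle of `A'B'C'` w.r.t. `D` is the circumcircle of `ABC`. -/
theorem negative_pedal_triangle_feet
    (A B C D A' B' C' : Pt)
    (hABC : ¬ Collinear ℝ ({A, B, C} : Set Pt))
    (hDv : D ∉ ({A, B, C} : Set Pt))
    (hDa : D ∉ L B C) (hDb : D ∉ L C A) (hDc : D ∉ L A B)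
    (hd1 : A' ≠ B') (hd2 : B' ≠ C') (hd3 : A' ≠ C')
    (h1 : (inner ℝ (A' - B) (B - D) : ℝ) = 0) (h2 : (inner ℝ (A' - C) (C - D) : ℝ) = 0)
    (h3 : (inner ℝ (B' - C) (C - D) : ℝ) = 0) (h4 : (inner ℝ (B' - A) (A - D) : ℝ) = 0)
    (h5 : (inner ℝ (C' - A) (A - D) : ℝ) = 0) (h6 : (inner ℝ (C' - B) (B - D) : ℝ) = 0) :
    IsFoot D B' C' A ∧ IsFoot D C' A' B ∧ IsFoot D A' B' C :=
  negative_pedal_triangle_feet_general A B C D A' B' C' hDv hd1 hd2 hd3 h1 h2 h3 h4 h5 h6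
end
end

section
/- Let Γ be a circle in the Euclidean plane and let D be a point not on Γ. Let A, B, C and A₁, B₁, C₁ be two triples of noncollinear points on Γ such that D is not a vertex of and does not lie on any side line of either triangle. Let A', B', C' and A₁', B₁', C₁' be the vertices of the negative-pedal triangles of ABC and of A₁B₁C₁ with respect to D (defined by the perpendicularity conditions), each triple noncollinear. Let E be the circle through the three orthogonal projections of D onto the sides of ABC and let S be the circle through A', B', C'. Then the three orthogonal projections of D onto the sides of A₁B₁C₁ all lie on E if and only if A₁', B₁', C₁' all lie on S. In other words, two triangles inscribed in the same circle share the same pedal circle with respect to D if and only if they share the same negative-pedal circle with respect to D. -/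
/-!
Let `q ≠ 0` be the power of `D` with respect to `Γ` (centre `O`) and let `φ` be the inversion at
`D` with power `q` followed by the point reflection in `O`. Since every `X ∈ Γ` satisfies
`‖X - D‖² = 2⟪X - D, O - D⟫ - q`, the map `φ` sends the foot of the perpendicular from `D` to a
chord `XY` of `Γ` to the vertex of the negative-pedal triangle opposite `XY`, for every inscribed
triangle.
Pulled back by `φ`, the circle `S` becomes the zero set of `a‖z - D‖² + ⟪b, z - D⟫ + q²`. That zero
set contains the feet of `ABC`, which are three distinct points of `E` because their images
`A'`, `B'`, `C'` are distinct; as `q² ≠ 0` it cannot be a line, so it is the circle `E`. Hence `z ∈ E ↔ φ z ∈ S` for all `z ≠ D`, in particular for the feet of `A₁B₁C₁`.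
-/

open EuclideanGeometry

noncomputable section

open scoped RealInnerProductSpace

section Plane

variable {V : Type*} [NormedAddCommGroup V] [InnerProductSpace ℝ V]

/-- Inversion at `D` with power `Γ.power D` (an anti-inversion when `D` is inside `Γ`), followed by
the point reflection in the centre of `Γ`. -/
def negPedalPoint (Γ : Sphere V) (D z : V) : V :=
  (2 : ℝ) • Γ.center - D - (Γ.power D / ‖z - D‖ ^ 2) • (z - D)

lemma norm_sub_sq_eq_of_mem_sphere {Γ : Sphere V} {x : V} (hx : x ∈ Γ) (D : V) :
    ‖x - D‖ ^ 2 = 2 * ⟪x - D, Γ.center - D⟫ - Γ.power D := by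
  have hr : ‖(x - D) - (Γ.center - D)‖ = Γ.radius := by
    rw [sub_sub_sub_cancel_right, ← dist_eq_norm]; exact hx
  rw [Sphere.power, ← hr, dist_eq_norm, norm_sub_rev D, norm_sub_sq_real (x - D)]
  ring

lemma eq_zero_of_inner_eq_zero_of_not_collinear (hV : Module.finrank ℝ V = 2) {p a b u : V}
    (h : ¬Collinear ℝ ({p, a, b} : Set V)) (ha : ⟪u, a - p⟫ = 0) (hb : ⟪u, b - p⟫ = 0) :
    u = 0 := by
  by_contra hu
  have : Fact (Module.finrank ℝ V = 1 + 1) := ⟨hV⟩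
  have : FiniteDimensional ℝ V := Module.finite_of_finrank_eq_succ hV
  apply h
  have hspan : vectorSpan ℝ ({p, a, b} : Set V) ≤ (ℝ ∙ u)ᗮ := by
    rw [vectorSpan_eq_span_vsub_set_right ℝ (Set.mem_insert p _), Submodule.span_le]
    rintro _ ⟨x, hx, rfl⟩
    rw [SetLike.mem_coe, Submodule.mem_orthogonal_singleton_iff_inner_right]
    change ⟪u, x - p⟫ = 0
    rcases hx with rfl | rfl | rfl
    · simp
    · exact ha
    · exact hb
  rw [collinear_iff_finrank_le_one,
    ← Submodule.finrank_orthogonal_span_singleton (𝕜 := ℝ) (n := 1) hu]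
  exact Submodule.finrank_mono hspan

lemma eq_negPedalPoint (hV : Module.finrank ℝ V = 2) {Γ : Sphere V} {D x y f v : V}
    (hDxy : ¬Collinear ℝ ({D, x, y} : Set V)) (hx : x ∈ Γ) (hy : y ∈ Γ) (hfD : f ≠ D)
    (hfx : ⟪f - D, x - D⟫ = ‖f - D‖ ^ 2) (hfy : ⟪f - D, y - D⟫ = ‖f - D‖ ^ 2)
    (hvx : ⟪v - x, x - D⟫ = 0) (hvy : ⟪v - y, y - D⟫ = 0) :
    v = negPedalPoint Γ D f := by
  have hf : ‖f - D‖ ≠ 0 := norm_ne_zero_iff.2 (sub_ne_zero.2 hfD)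
  have perp : ∀ z ∈ Γ, ⟪f - D, z - D⟫ = ‖f - D‖ ^ 2 → ⟪v - z, z - D⟫ = 0 →
      ⟪v - negPedalPoint Γ D f, z - D⟫ = 0 := by
    intro z hz hfz hvz
    have hsplit : v - negPedalPoint Γ D f = (v - z) + (z - D) - (2 : ℝ) • (Γ.center - D)
        + (Γ.power D / ‖f - D‖ ^ 2) • (f - D) := by
      unfold negPedalPoint; module
    rw [hsplit, inner_add_left, inner_sub_left, inner_add_left, real_inner_smul_left,
      real_inner_smul_left, hvz, hfz, real_inner_self_eq_norm_sq, norm_sub_sq_eq_of_mem_sphere hz D,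
      real_inner_comm (Γ.center - D)]
    field_simp
    ring
  exact sub_eq_zero.1 (eq_zero_of_inner_eq_zero_of_not_collinear hV hDxy
    (perp x hx hfx hvx) (perp y hy hfy hvy))

lemma negPedalPoint_mem_sphere_iff {Γ S : Sphere V} {D z : V} (hS : 0 ≤ S.radius) (hz : z ≠ D) :
    negPedalPoint Γ D z ∈ S ↔
      (‖(2 : ℝ) • Γ.center - D - S.center‖ ^ 2 - S.radius ^ 2) * ‖z - D‖ ^ 2
        + ⟪(-2 * Γ.power D) • ((2 : ℝ) • Γ.center - D - S.center), z - D⟫ + Γ.power D ^ 2 = 0 := by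
  set u := (2 : ℝ) • Γ.center - D - S.center
  have hz' : ‖z - D‖ ≠ 0 := norm_ne_zero_iff.2 (sub_ne_zero.2 hz)
  have hsplit : negPedalPoint Γ D z - S.center = u - (Γ.power D / ‖z - D‖ ^ 2) • (z - D) := by
    simp only [negPedalPoint, u]; abel
  have hid : (‖u‖ ^ 2 - S.radius ^ 2) * ‖z - D‖ ^ 2
        + ⟪(-2 * Γ.power D) • u, z - D⟫ + Γ.power D ^ 2
      = ‖z - D‖ ^ 2 * (‖negPedalPoint Γ D z - S.center‖ ^ 2 - S.radius ^ 2) := by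
    rw [hsplit, norm_sub_sq_real u, real_inner_smul_right, norm_smul, real_inner_smul_left,
      Real.norm_eq_abs, mul_pow, sq_abs]
    field_simp
    ring
  rw [hid, mem_sphere, dist_eq_norm, ← sq_eq_sq₀ (norm_nonneg _) hS, mul_eq_zero, sub_eq_zero]
  simp [hz']

lemma mem_sphere_iff_of_not_collinear (hV : Module.finrank ℝ V = 2) {E : Sphere V} {D b : V}
    {a k : ℝ} (hk : k ≠ 0) {P Q R : V} (hPQR : ¬Collinear ℝ ({P, Q, R} : Set V))
    (hP : P ∈ E) (hQ : Q ∈ E) (hR : R ∈ E) (gP : a * ‖P - D‖ ^ 2 + ⟪b, P - D⟫ + k = 0)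
    (gQ : a * ‖Q - D‖ ^ 2 + ⟪b, Q - D⟫ + k = 0) (gR : a * ‖R - D‖ ^ 2 + ⟪b, R - D⟫ + k = 0)
    (z : V) : z ∈ E ↔ a * ‖z - D‖ ^ 2 + ⟪b, z - D⟫ + k = 0 := by
  have : FiniteDimensional ℝ V := Module.finite_of_finrank_eq_succ hV
  have ha : a ≠ 0 := by
    rintro rfl
    have hb : b = 0 := by
      refine eq_zero_of_inner_eq_zero_of_not_collinear hV hPQR ?_ ?_
      · rw [← sub_sub_sub_cancel_right Q P D, inner_sub_right]; linarith
      · rw [← sub_sub_sub_cancel_right R P D, inner_sub_right]; linarith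
    simp [hb, hk] at gP
  set m := D - (2 * a)⁻¹ • b
  have hsq : ∀ w, a * ‖w - D‖ ^ 2 + ⟪b, w - D⟫ + k = a * ‖w - m‖ ^ 2 + (k - ‖b‖ ^ 2 / (4 * a)) := by
    intro w
    rw [show w - m = (w - D) + (2 * a)⁻¹ • b by simp only [m]; abel, norm_add_sq_real,
      real_inner_smul_right, norm_smul, Real.norm_eq_abs, mul_pow, sq_abs, real_inner_comm b]
    field_simp
    ring
  have hdist : ∀ w, a * ‖w - D‖ ^ 2 + ⟪b, w - D⟫ + k = 0 ↔ dist w m = dist P m := by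
    intro w
    have e : a * ‖w - D‖ ^ 2 + ⟪b, w - D⟫ + k = a * (‖w - m‖ ^ 2 - ‖P - m‖ ^ 2) := by
      linear_combination hsq w - hsq P + gP
    rw [e, mul_eq_zero, sub_eq_zero, sq_eq_sq₀ (norm_nonneg _) (norm_nonneg _), dist_eq_norm,
      dist_eq_norm]
    simp [ha]
  have hE : E = ⟨m, dist P m⟩ := by
    by_contra hne
    rcases eq_of_mem_sphere_of_mem_sphere_of_finrank_eq_two hV hne (ne₁₂_of_not_collinear hPQR)
      hP hQ hR (mem_sphere.2 rfl) ((hdist Q).1 gQ) ((hdist R).1 gR) with h | h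
    exacts [ne₁₃_of_not_collinear hPQR h.symm, ne₂₃_of_not_collinear hPQR h.symm]
  rw [hdist z, hE, mem_sphere]

lemma mem_sphere_iff_negPedalPoint_mem_sphere (hV : Module.finrank ℝ V = 2) {Γ E S : Sphere V}
    {D P Q R : V} (hΓ : Γ.power D ≠ 0) (hPD : P ≠ D) (hQD : Q ≠ D) (hRD : R ≠ D)
    (hPQR : ¬Collinear ℝ
      ({negPedalPoint Γ D P, negPedalPoint Γ D Q, negPedalPoint Γ D R} : Set V))
    (hP : P ∈ E) (hQ : Q ∈ E) (hR : R ∈ E) (hPS : negPedalPoint Γ D P ∈ S)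
    (hQS : negPedalPoint Γ D Q ∈ S) (hRS : negPedalPoint Γ D R ∈ S) {z : V} (hz : z ≠ D) :
    z ∈ E ↔ negPedalPoint Γ D z ∈ S := by
  have hS := S.radius_nonneg_of_mem hPS
  have hPQR' : ¬Collinear ℝ ({P, Q, R} : Set V) := by
    rw [← affineIndependent_iff_not_collinear_set]
    refine Cospherical.affineIndependent_of_ne (E.cospherical.subset ?_)
      (fun h => ne₁₂_of_not_collinear hPQR (congrArg _ h))
      (fun h => ne₁₃_of_not_collinear hPQR (congrArg _ h))
      (fun h => ne₂₃_of_not_collinear hPQR (congrArg _ h))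
    rintro _ (rfl | rfl | rfl) <;> assumption
  rw [negPedalPoint_mem_sphere_iff hS hz]
  exact mem_sphere_iff_of_not_collinear hV (pow_ne_zero 2 hΓ) hPQR' hP hQ hR
    ((negPedalPoint_mem_sphere_iff hS hPD).1 hPS) ((negPedalPoint_mem_sphere_iff hS hQD).1 hQS)
    ((negPedalPoint_mem_sphere_iff hS hRD).1 hRS) z

end Plane

lemma IsFoot.symm {D X Y F : Pt} (h : IsFoot D X Y F) : IsFoot D Y X F :=
  ⟨by rw [L, Set.pair_comm]; exact h.1, by rw [← neg_sub X Y, inner_neg_right, h.2, neg_zero]⟩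

lemma IsFoot.ne {D X Y F : Pt} (h : IsFoot D X Y F) (hD : D ∉ L X Y) : F ≠ D := by
  rintro rfl
  exact hD h.1

lemma IsFoot.inner_sub_eq_norm_sq {D X Y F : Pt} (h : IsFoot D X Y F) :
    ⟪F - D, X - D⟫ = ‖F - D‖ ^ 2 := by
  obtain ⟨t, ht⟩ : ∃ t : ℝ, t • (X - Y) = X - F := by
    have := AffineSubspace.vsub_mem_direction (left_mem_affineSpan_pair ℝ X Y) h.1
    rwa [direction_affineSpan, vectorSpan_pair, Submodule.mem_span_singleton] at this
  have hperp : ⟪F - D, X - F⟫ = 0 := by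
    rw [← ht, real_inner_smul_right, ← neg_sub, inner_neg_left, h.2, neg_zero, mul_zero]
  rw [← sub_add_sub_cancel X F D, inner_add_right, hperp, zero_add, real_inner_self_eq_norm_sq]

lemma not_collinear_of_notMem_L {D X Y : Pt} (hXY : X ≠ Y) (hD : D ∉ L X Y) :
    ¬Collinear ℝ ({D, X, Y} : Set Pt) := fun hc =>
  hD (hc.mem_affineSpan_of_mem_of_ne (by simp) (by simp) (by simp) hXY)

lemma eq_negPedalPoint_of_isFoot {Γ : Sphere Pt} {D X Y F V : Pt} (hX : X ∈ Γ) (hY : Y ∈ Γ)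
    (hXY : X ≠ Y) (hD : D ∉ L X Y) (hF : IsFoot D X Y F) (hVX : ⟪V - X, X - D⟫ = 0)
    (hVY : ⟪V - Y, Y - D⟫ = 0) : V = negPedalPoint Γ D F :=
  eq_negPedalPoint finrank_euclideanSpace_fin (not_collinear_of_notMem_L hXY hD) hX hY (hF.ne hD)
    hF.inner_sub_eq_norm_sq hF.symm.inner_sub_eq_norm_sq hVX hVY

theorem pedal_circle_iff_negative_pedal_circle_general
    (Γ : EuclideanGeometry.Sphere Pt) (D : Pt) (hD : D ∉ Γ)
    (A B C A₁ B₁ C₁ : Pt)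
    (hABC : ¬ Collinear ℝ ({A, B, C} : Set Pt))
    (hABC₁ : ¬ Collinear ℝ ({A₁, B₁, C₁} : Set Pt))
    (hA : A ∈ Γ) (hB : B ∈ Γ) (hC : C ∈ Γ)
    (hA₁ : A₁ ∈ Γ) (hB₁ : B₁ ∈ Γ) (hC₁ : C₁ ∈ Γ)
    (hDa : D ∉ L B C) (hDb : D ∉ L C A) (hDc : D ∉ L A B)
    (hDa₁ : D ∉ L B₁ C₁) (hDb₁ : D ∉ L C₁ A₁) (hDc₁ : D ∉ L A₁ B₁)
    (A' B' C' : Pt)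
    (h1 : (inner ℝ (A' - B) (B - D) : ℝ) = 0) (h2 : (inner ℝ (A' - C) (C - D) : ℝ) = 0)
    (h3 : (inner ℝ (B' - C) (C - D) : ℝ) = 0) (h4 : (inner ℝ (B' - A) (A - D) : ℝ) = 0)
    (h5 : (inner ℝ (C' - A) (A - D) : ℝ) = 0) (h6 : (inner ℝ (C' - B) (B - D) : ℝ) = 0)
    (hnc' : ¬ Collinear ℝ ({A', B', C'} : Set Pt))
    (A₁' B₁' C₁' : Pt)
    (h1' : (inner ℝ (A₁' - B₁) (B₁ - D) : ℝ) = 0) (h2' : (inner ℝ (A₁' - C₁) (C₁ - D) : ℝ) = 0)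
    (h3' : (inner ℝ (B₁' - C₁) (C₁ - D) : ℝ) = 0) (h4' : (inner ℝ (B₁' - A₁) (A₁ - D) : ℝ) = 0)
    (h5' : (inner ℝ (C₁' - A₁) (A₁ - D) : ℝ) = 0) (h6' : (inner ℝ (C₁' - B₁) (B₁ - D) : ℝ) = 0)
    (Fa Fb Fc : Pt)
    (hFa : IsFoot D B C Fa) (hFb : IsFoot D C A Fb) (hFc : IsFoot D A B Fc)
    (E : EuclideanGeometry.Sphere Pt) (hFaE : Fa ∈ E) (hFbE : Fb ∈ E) (hFcE : Fc ∈ E)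
    (S : EuclideanGeometry.Sphere Pt) (hA'S : A' ∈ S) (hB'S : B' ∈ S) (hC'S : C' ∈ S)
    (F₁a F₁b F₁c : Pt)
    (hF₁a : IsFoot D B₁ C₁ F₁a) (hF₁b : IsFoot D C₁ A₁ F₁b) (hF₁c : IsFoot D A₁ B₁ F₁c) :
    (F₁a ∈ E ∧ F₁b ∈ E ∧ F₁c ∈ E) ↔ (A₁' ∈ S ∧ B₁' ∈ S ∧ C₁' ∈ S) := by
  have hΓ : Γ.power D ≠ 0 :=
    (Sphere.power_eq_zero_iff_mem_sphere (Γ.radius_nonneg_of_mem hA)).not.2 hD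
  obtain rfl := eq_negPedalPoint_of_isFoot hB hC (ne₂₃_of_not_collinear hABC) hDa hFa h1 h2
  obtain rfl := eq_negPedalPoint_of_isFoot hC hA (ne₁₃_of_not_collinear hABC).symm hDb hFb h3 h4
  obtain rfl := eq_negPedalPoint_of_isFoot hA hB (ne₁₂_of_not_collinear hABC) hDc hFc h5 h6
  obtain rfl := eq_negPedalPoint_of_isFoot hB₁ hC₁ (ne₂₃_of_not_collinear hABC₁) hDa₁ hF₁a h1' h2'
  obtain rfl :=
    eq_negPedalPoint_of_isFoot hC₁ hA₁ (ne₁₃_of_not_collinear hABC₁).symm hDb₁ hF₁b h3' h4'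
  obtain rfl := eq_negPedalPoint_of_isFoot hA₁ hB₁ (ne₁₂_of_not_collinear hABC₁) hDc₁ hF₁c h5' h6'
  have hE_iff_S {z : Pt} (hz : z ≠ D) : z ∈ E ↔ negPedalPoint Γ D z ∈ S :=
    mem_sphere_iff_negPedalPoint_mem_sphere finrank_euclideanSpace_fin hΓ (hFa.ne hDa) (hFb.ne hDb)
      (hFc.ne hDc) hnc' hFaE hFbE hFcE hA'S hB'S hC'S hz
  rw [hE_iff_S (hF₁a.ne hDa₁), hE_iff_S (hF₁b.ne hDb₁), hE_iff_S (hF₁c.ne hDc₁)]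

/-- **Corollary 4.4**: two triangles inscribed in the same circle share the same pedal
circle w.r.t. `D` if and only if they share the same negative-pedal circle w.r.t. `D`. -/
theorem pedal_circle_iff_negative_pedal_circle
    (Γ : EuclideanGeometry.Sphere Pt) (D : Pt) (hD : D ∉ Γ)
    (A B C A₁ B₁ C₁ : Pt)
    (hABC : ¬ Collinear ℝ ({A, B, C} : Set Pt))
    (hABC₁ : ¬ Collinear ℝ ({A₁, B₁, C₁} : Set Pt))
    (hA : A ∈ Γ) (hB : B ∈ Γ) (hC : C ∈ Γ)
    (hA₁ : A₁ ∈ Γ) (hB₁ : B₁ ∈ Γ) (hC₁ : C₁ ∈ Γ)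
    (hDv : D ∉ ({A, B, C} : Set Pt)) (hDv₁ : D ∉ ({A₁, B₁, C₁} : Set Pt))
    (hDa : D ∉ L B C) (hDb : D ∉ L C A) (hDc : D ∉ L A B)
    (hDa₁ : D ∉ L B₁ C₁) (hDb₁ : D ∉ L C₁ A₁) (hDc₁ : D ∉ L A₁ B₁)
    (A' B' C' : Pt)
    (h1 : (inner ℝ (A' - B) (B - D) : ℝ) = 0) (h2 : (inner ℝ (A' - C) (C - D) : ℝ) = 0)
    (h3 : (inner ℝ (B' - C) (C - D) : ℝ) = 0) (h4 : (inner ℝ (B' - A) (A - D) : ℝ) = 0)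
    (h5 : (inner ℝ (C' - A) (A - D) : ℝ) = 0) (h6 : (inner ℝ (C' - B) (B - D) : ℝ) = 0)
    (hnc' : ¬ Collinear ℝ ({A', B', C'} : Set Pt))
    (A₁' B₁' C₁' : Pt)
    (h1' : (inner ℝ (A₁' - B₁) (B₁ - D) : ℝ) = 0) (h2' : (inner ℝ (A₁' - C₁) (C₁ - D) : ℝ) = 0)
    (h3' : (inner ℝ (B₁' - C₁) (C₁ - D) : ℝ) = 0) (h4' : (inner ℝ (B₁' - A₁) (A₁ - D) : ℝ) = 0)
    (h5' : (inner ℝ (C₁' - A₁) (A₁ - D) : ℝ) = 0) (h6' : (inner ℝ (C₁' - B₁) (B₁ - D) : ℝ) = 0)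
    (hnc₁' : ¬ Collinear ℝ ({A₁', B₁', C₁'} : Set Pt))
    (Fa Fb Fc : Pt)
    (hFa : IsFoot D B C Fa) (hFb : IsFoot D C A Fb) (hFc : IsFoot D A B Fc)
    (E : EuclideanGeometry.Sphere Pt) (hFaE : Fa ∈ E) (hFbE : Fb ∈ E) (hFcE : Fc ∈ E)
    (S : EuclideanGeometry.Sphere Pt) (hA'S : A' ∈ S) (hB'S : B' ∈ S) (hC'S : C' ∈ S)
    (F₁a F₁b F₁c : Pt)
    (hF₁a : IsFoot D B₁ C₁ F₁a) (hF₁b : IsFoot D C₁ A₁ F₁b) (hF₁c : IsFoot D A₁ B₁ F₁c) :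
    (F₁a ∈ E ∧ F₁b ∈ E ∧ F₁c ∈ E) ↔ (A₁' ∈ S ∧ B₁' ∈ S ∧ C₁' ∈ S) :=
  pedal_circle_iff_negative_pedal_circle_general Γ D hD A B C A₁ B₁ C₁ hABC hABC₁ hA hB hC hA₁ hB₁
    hC₁ hDa hDb hDc hDa₁ hDb₁ hDc₁ A' B' C' h1 h2 h3 h4 h5 h6 hnc' A₁' B₁' C₁' h1' h2' h3' h4' h5'
    h6' Fa Fb Fc hFa hFb hFc E hFaE hFbE hFcE S hA'S hB'S hC'S F₁a F₁b F₁c hF₁a hF₁b hF₁c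
end
end

section
/- Let A, B, C be noncollinear points in the Euclidean plane, let D be a point with D ∉ {A, B, C} and D not on the lines CA and AB, and let r > 0, with ι the inversion of center D and radius r. Let B_p = ι(F_B) and C_p = ι(F_C), where F_B and F_C are the orthogonal projections of D onto the lines CA and AB respectively. Then B_p and C_p both lie on the polar of A, i.e. ⟪B_p − ι(A), A − D⟫ = 0 and ⟪C_p − ι(A), A − D⟫ = 0; in particular ⟪B_p − C_p, A − D⟫ = 0, so that when B_p ≠ C_p the line B_pC_p is the polar of A and is perpendicular to the line DA. -/
open EuclideanGeometry

noncomputable section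

/-!
With `D` as origin, the polar of `A` is `{X : ⟪X - D, A - D⟫ = r²}`, since
`⟪ι(A) - D, A - D⟫ = r²`. If `F` is the foot of the perpendicular from `D` to a line through `A`,
then `⟪F - D, A - D⟫ = ‖F - D‖²`, hence `⟪ι(F) - D, A - D⟫ = r²` as well: the pole `ι(F)` of the
line lies on the polar of `A`.
-/

theorem inner_invPt_sub_center (D X : Pt) (r : ℝ) (hX : X ≠ D) :
    (inner ℝ (invPt D r X - D) (X - D) : ℝ) = r ^ 2 := by
  have hXD : ‖X - D‖ ≠ 0 := norm_ne_zero_iff.2 (sub_ne_zero.2 hX)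
  rw [invPt, add_sub_cancel_left, real_inner_smul_left, real_inner_self_eq_norm_sq]
  field_simp

theorem IsFoot.inner_sub_eq_zero_of_mem {D X Y F P : Pt} (hF : IsFoot D X Y F)
    (hP : P ∈ L X Y) : (inner ℝ (F - D) (P - F) : ℝ) = 0 := by
  have hdir : P -ᵥ F ∈ (L X Y).direction := AffineSubspace.vsub_mem_direction hP hF.1
  rw [L, direction_affineSpan, vectorSpan_pair] at hdir
  obtain ⟨t, ht⟩ := Submodule.mem_span_singleton.1 hdir
  simp only [vsub_eq_sub] at ht
  rw [← ht, real_inner_smul_right, ← neg_sub D F, inner_neg_left, hF.2, neg_zero, mul_zero]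

theorem IsFoot.inner_sub_center_eq_norm_sq {D X Y F P : Pt} (hF : IsFoot D X Y F)
    (hP : P ∈ L X Y) : (inner ℝ (F - D) (P - D) : ℝ) = ‖F - D‖ ^ 2 := by
  rw [← sub_add_sub_cancel P F D, inner_add_right, hF.inner_sub_eq_zero_of_mem hP, zero_add,
    real_inner_self_eq_norm_sq]

theorem IsFoot.inner_invPt_sub_center {D X Y F P : Pt} (r : ℝ) (hF : IsFoot D X Y F)
    (hFD : F ≠ D) (hP : P ∈ L X Y) : (inner ℝ (invPt D r F - D) (P - D) : ℝ) = r ^ 2 := by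
  have hFD' : ‖F - D‖ ≠ 0 := norm_ne_zero_iff.2 (sub_ne_zero.2 hFD)
  rw [invPt, add_sub_cancel_left, real_inner_smul_left, hF.inner_sub_center_eq_norm_sq hP]
  field_simp

theorem IsFoot.inner_invPt_sub_invPt {D X Y F A : Pt} (r : ℝ) (hF : IsFoot D X Y F)
    (hFD : F ≠ D) (hA : A ∈ L X Y) :
    (inner ℝ (invPt D r F - invPt D r A) (A - D) : ℝ) = 0 := by
  rcases eq_or_ne A D with rfl | hAD
  · rw [sub_self, inner_zero_right]
  rw [← sub_sub_sub_cancel_right _ _ D, inner_sub_left, hF.inner_invPt_sub_center r hFD hA,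
    _root_.inner_invPt_sub_center D A r hAD, sub_self]

theorem poles_of_sides_on_polar_of_vertex_general
    (A B C D : Pt) (r : ℝ)
    (hDb : D ∉ L C A) (hDc : D ∉ L A B)
    (Fb Fc Bp Cp : Pt)
    (hFb : IsFoot D C A Fb) (hFc : IsFoot D A B Fc)
    (hBp : Bp = invPt D r Fb) (hCp : Cp = invPt D r Fc) :
    (inner ℝ (Bp - invPt D r A) (A - D) : ℝ) = 0 ∧
    (inner ℝ (Cp - invPt D r A) (A - D) : ℝ) = 0 ∧
    (inner ℝ (Bp - Cp) (A - D) : ℝ) = 0 := by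
  have hFbD : Fb ≠ D := fun h => hDb (h ▸ hFb.1)
  have hFcD : Fc ≠ D := fun h => hDc (h ▸ hFc.1)
  have hb : (inner ℝ (Bp - invPt D r A) (A - D) : ℝ) = 0 :=
    hBp ▸ hFb.inner_invPt_sub_invPt r hFbD (right_mem_affineSpan_pair ℝ C A)
  have hc : (inner ℝ (Cp - invPt D r A) (A - D) : ℝ) = 0 :=
    hCp ▸ hFc.inner_invPt_sub_invPt r hFcD (left_mem_affineSpan_pair ℝ A B)
  refine ⟨hb, hc, ?_⟩
  rw [← sub_sub_sub_cancel_right Bp Cp (invPt D r A), inner_sub_left, hb, hc, sub_zero]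

/-- Key step in Proposition 4.6: the poles `Bp`, `Cp` of the sides `CA`, `AB` through the
vertex `A` lie on the polar of `A`, which is perpendicular to `DA`. -/
theorem poles_of_sides_on_polar_of_vertex
    (A B C D : Pt) (r : ℝ) (hr : 0 < r)
    (hABC : ¬ Collinear ℝ ({A, B, C} : Set Pt))
    (hDv : D ∉ ({A, B, C} : Set Pt))
    (hDb : D ∉ L C A) (hDc : D ∉ L A B)
    (Fb Fc Bp Cp : Pt)
    (hFb : IsFoot D C A Fb) (hFc : IsFoot D A B Fc)
    (hBp : Bp = invPt D r Fb) (hCp : Cp = invPt D r Fc) :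
    (inner ℝ (Bp - invPt D r A) (A - D) : ℝ) = 0 ∧
    (inner ℝ (Cp - invPt D r A) (A - D) : ℝ) = 0 ∧
    (inner ℝ (Bp - Cp) (A - D) : ℝ) = 0 :=
  poles_of_sides_on_polar_of_vertex_general A B C D r hDb hDc Fb Fc Bp Cp hFb hFc hBp hCp
end
end

section
/- Let A, B, C be noncollinear points on a circle Γ in the Euclidean plane, and let D be a point not on Γ and not on any of the lines BC, CA, AB. Then the three orthogonal projections of D onto the lines BC, CA, AB are noncollinear; consequently there is a unique circle (the pedal circle of ABC with respect to D) passing through them. -/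
open EuclideanGeometry

noncomputable section

/-!
Identify the plane with `ℂ`, putting the circumcentre at `0`, and write `s = r²` for the squared
circumradius, so that `z̄ = s / z` on the circle. The foot of the perpendicular from `d` to the
chord `bc` is then `(b + c + d - b c d̄ / s) / 2`, which gives the factorisations
`2 s (f_b - f_a) = (a - b)(s - c d̄)` and `2 s (f_c - f_a) = (a - c)(s - b d̄)`. Taking signed
areas yields Euler's formula: the pedal triangle has `(s - |d|²) / (4 s)` times the signed area
of `ABC`, which is nonzero exactly when `D` is off the circle.
-/

open ComplexConjugate

namespace Complex

theorem exists_ofReal_mul_eq_of_im_conj_mul_eq_zero {u v : ℂ} (hu : u ≠ 0)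
    (h : (conj u * v).im = 0) : ∃ t : ℝ, v = t * u := by
  refine ⟨(conj u * v).re / normSq u, ?_⟩
  have hw : conj u * v = (conj u * v).re := ext (by simp) (by simp [h])
  have hn : (normSq u : ℂ) ≠ 0 := by exact_mod_cast (normSq_pos.2 hu).ne'
  have hu' : conj u ≠ 0 := (map_ne_zero conj).2 hu
  rw [ofReal_div, ← hw, ← mul_conj]
  field_simp

theorem im_conj_ofReal_mul_mul_ofReal_mul (r t : ℝ) (z : ℂ) :
    (conj (r * z) * (t * z)).im = 0 := by
  rw [map_mul, conj_ofReal, mul_mul_mul_comm, ← ofReal_mul, mul_comm (conj z),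
    mul_conj, ← ofReal_mul, ofReal_im]

theorem conj_mul_sub_mul_conj (z w : ℂ) :
    conj z * w - z * conj w = (2 * (conj z * w).im : ℝ) * I := by
  rw [← sub_conj, map_mul, conj_conj]

theorem two_mul_chord_foot_eq {b c d f : ℂ} {s t : ℝ} (hb : b * conj b = s)
    (hc : c * conj c = s) (hbc : b ≠ c) (hf : f = b + t * (c - b))
    (horth : (conj (d - f) * (b - c)).re = 0) :
    2 * s * f = s * (b + c + d) - b * c * conj d := by
  have horth' : conj (d - f) * (b - c) + conj (conj (d - f) * (b - c)) = 0 := by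
    rw [add_conj, horth, mul_zero, ofReal_zero]
  have hbc' : conj c - conj b ≠ 0 := by
    rw [sub_ne_zero, Ne, (RingHom.injective _).eq_iff]
    exact hbc.symm
  apply mul_left_cancel₀ hbc'
  subst hf
  simp only [map_sub, map_add, map_mul, conj_ofReal, conj_conj] at horth'
  linear_combination (s : ℂ) * horth' + (conj d * b - s) * hc + (s - conj d * c) * hb

theorem pedal_area_eq {a b c d fa fb fc : ℂ} {s : ℝ}
    (ha : a * conj a = s) (hb : b * conj b = s) (hc : c * conj c = s)
    (hfa : 2 * s * fa = s * (b + c + d) - b * c * conj d)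
    (hfb : 2 * s * fb = s * (c + a + d) - c * a * conj d)
    (hfc : 2 * s * fc = s * (a + b + d) - a * b * conj d) :
    4 * s ^ 2 * (conj (fb - fa) * (fc - fa)).im
      = s * (s - normSq d) * (conj (b - a) * (c - a)).im := by
  set u := fb - fa
  set v := fc - fa
  have hu : 2 * s * u = (a - b) * (s - c * conj d) := by linear_combination hfb - hfa
  have hv : 2 * s * v = (a - c) * (s - b * conj d) := by linear_combination hfc - hfa
  have hu' : 2 * s * conj u = (conj a - conj b) * (s - conj c * d) := by
    simpa [conj_ofReal, map_ofNat] using congrArg conj hu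
  have hv' : 2 * s * conj v = (conj a - conj c) * (s - conj b * d) := by
    simpa [conj_ofReal, map_ofNat] using congrArg conj hv
  have key : 4 * s ^ 2 * (conj u * v - u * conj v)
      = s * (s - d * conj d) * (conj (b - a) * (c - a) - (b - a) * conj (c - a)) := by
    rw [map_sub conj b a, map_sub conj c a]
    -- modulo the circle equations, the coefficients of `d`, `d̄` and `d d̄` on both sides agree
    linear_combination (2 * s * v) * hu' + (conj a - conj b) * (s - conj c * d) * hv
      - (2 * s * conj v) * hu - (a - b) * (s - c * conj d) * hv'
      + (-s*d*(conj c - conj b) - s*conj d*(b - c) + d*conj d*(b*conj c - conj b*c)) * ha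
      + (-s*d*(conj a - conj c) + s*conj d*(a - c) + d*conj d*(conj a*c - a*conj c)) * hb
      + (s*d*(conj a - conj b) - s*conj d*(a - b) + d*conj d*(a*conj b - conj a*b)) * hc
  rw [conj_mul_sub_mul_conj, conj_mul_sub_mul_conj, mul_conj] at key
  have h : ((4 * s ^ 2 * (conj u * v).im : ℝ) : ℂ) * (2 * I)
      = ((s * (s - normSq d) * (conj (b - a) * (c - a)).im : ℝ) : ℂ) * (2 * I) := by
    push_cast at key ⊢
    linear_combination key
  exact_mod_cast mul_right_cancel₀ (by simp) h

end Complex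

theorem existsUnique_sphere_of_not_collinear {V P : Type*} [NormedAddCommGroup V]
    [InnerProductSpace ℝ V] [MetricSpace P] [NormedAddTorsor V P] (hV : Module.finrank ℝ V = 2)
    {p₁ p₂ p₃ : P} (h : ¬ Collinear ℝ ({p₁, p₂, p₃} : Set P)) :
    ∃! s : Sphere P, p₁ ∈ s ∧ p₂ ∈ s ∧ p₃ ∈ s := by
  have : FiniteDimensional ℝ V := Module.finite_of_finrank_eq_succ hV
  have hind : AffineIndependent ℝ ![p₁, p₂, p₃] := affineIndependent_iff_not_collinear_set.2 h
  have hspan : affineSpan ℝ (Set.range ![p₁, p₂, p₃]) = ⊤ := by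
    rw [hind.affineSpan_eq_top_iff_card_eq_finrank_add_one, hV]
    simp
  have hrange (s : Sphere P) : Set.range ![p₁, p₂, p₃] ⊆ s ↔ p₁ ∈ s ∧ p₂ ∈ s ∧ p₃ ∈ s := by
    simp only [Set.range_subset_iff, Fin.forall_fin_succ, Sphere.mem_coe]
    simp
  obtain ⟨c, ⟨-, hc⟩, huniq⟩ := hind.existsUnique_dist_eq
  exact ⟨c, (hrange c).1 hc,
    fun s hs => huniq s ⟨hspan ▸ AffineSubspace.mem_top _ _ _, (hrange s).2 hs⟩⟩

/-- The complex coordinate `x 0 + x 1 * I` of `P - O`. -/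
def complexCoord (O P : Pt) : ℂ := Complex.orthonormalBasisOneI.repr.symm (P - O)

theorem complexCoord_sub_complexCoord (O P Q : Pt) :
    complexCoord O Q - complexCoord O P = Complex.orthonormalBasisOneI.repr.symm (Q - P) := by
  rw [complexCoord, complexCoord, ← map_sub, sub_sub_sub_cancel_right]

theorem complexCoord_mul_conj (O P : Pt) :
    complexCoord O P * conj (complexCoord O P) = ((dist P O ^ 2 : ℝ) : ℂ) := by
  rw [Complex.mul_conj, Complex.normSq_eq_norm_sq, complexCoord, LinearIsometryEquiv.norm_map,
    dist_eq_norm]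

theorem complexCoord_center_mul_conj_of_mem {Γ : Sphere Pt} {P : Pt} (hP : P ∈ Γ) :
    complexCoord Γ.center P * conj (complexCoord Γ.center P) = ((Γ.radius ^ 2 : ℝ) : ℂ) := by
  rw [complexCoord_mul_conj, mem_sphere.1 hP]

theorem collinear_iff_im_complexCoord (O P Q R : Pt) :
    Collinear ℝ ({P, Q, R} : Set Pt) ↔
      (conj (complexCoord O Q - complexCoord O P)
        * (complexCoord O R - complexCoord O P)).im = 0 := by
  set e := Complex.orthonormalBasisOneI.repr.symm
  rw [complexCoord_sub_complexCoord, complexCoord_sub_complexCoord,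
    collinear_iff_of_mem (Set.mem_insert P _)]
  constructor
  · rintro ⟨v, hv⟩
    obtain ⟨r, rfl⟩ := hv Q (by simp)
    obtain ⟨t, rfl⟩ := hv R (by simp)
    simp only [vadd_eq_add, add_sub_cancel_right, map_smul, Complex.real_smul]
    exact Complex.im_conj_ofReal_mul_mul_ofReal_mul r t (e v)
  · intro h
    rcases eq_or_ne Q P with rfl | hQP
    · refine ⟨R - Q, ?_⟩
      simp only [Set.mem_insert_iff, Set.mem_singleton_iff]
      rintro p (rfl | rfl | rfl)
      · exact ⟨0, by simp⟩
      · exact ⟨0, by simp⟩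
      · exact ⟨1, by simp⟩
    · have hu : e (Q - P) ≠ 0 := by simpa [sub_eq_zero] using hQP
      obtain ⟨t, ht⟩ := Complex.exists_ofReal_mul_eq_of_im_conj_mul_eq_zero hu h
      refine ⟨Q - P, ?_⟩
      simp only [Set.mem_insert_iff, Set.mem_singleton_iff]
      rintro p (rfl | rfl | rfl)
      · exact ⟨0, by simp⟩
      · exact ⟨1, by simp⟩
      · refine ⟨t, ?_⟩
        rw [vadd_eq_add, ← sub_eq_iff_eq_add]
        apply e.injective
        rw [ht, map_smul, Complex.real_smul]

theorem IsFoot.exists_complexCoord {D X Y F : Pt} (h : IsFoot D X Y F) (O : Pt) :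
    ∃ t : ℝ, complexCoord O F = complexCoord O X + t * (complexCoord O Y - complexCoord O X) ∧
      (conj (complexCoord O D - complexCoord O F)
        * (complexCoord O X - complexCoord O Y)).re = 0 := by
  obtain ⟨hF, horth⟩ := h
  obtain ⟨t, rfl⟩ := mem_affineSpan_pair_iff_exists_lineMap_eq.1 hF
  refine ⟨t, ?_, ?_⟩
  · rw [← sub_eq_iff_eq_add', complexCoord_sub_complexCoord, complexCoord_sub_complexCoord,
      AffineMap.lineMap_apply, vadd_eq_add, vsub_eq_sub, add_sub_cancel_right, map_smul,
      Complex.real_smul]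
  · rw [complexCoord_sub_complexCoord, complexCoord_sub_complexCoord, mul_comm, ← Complex.inner,
      LinearIsometryEquiv.inner_map_map]
    exact horth

theorem IsFoot.two_mul_complexCoord {Γ : Sphere Pt} {D X Y F : Pt} (h : IsFoot D X Y F)
    (hX : X ∈ Γ) (hY : Y ∈ Γ) (hXY : X ≠ Y) :
    2 * (Γ.radius ^ 2 : ℝ) * complexCoord Γ.center F
      = (Γ.radius ^ 2 : ℝ) * (complexCoord Γ.center X + complexCoord Γ.center Y
          + complexCoord Γ.center D)
        - complexCoord Γ.center X * complexCoord Γ.center Y * conj (complexCoord Γ.center D) := by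
  obtain ⟨t, hF, horth⟩ := h.exists_complexCoord Γ.center
  refine Complex.two_mul_chord_foot_eq (complexCoord_center_mul_conj_of_mem hX)
    (complexCoord_center_mul_conj_of_mem hY) ?_ hF horth
  rwa [Ne, ← sub_eq_zero, complexCoord_sub_complexCoord,
    map_eq_zero_iff _ (LinearIsometryEquiv.injective _), sub_eq_zero]

theorem pedal_feet_noncollinear_general
    (Γ : EuclideanGeometry.Sphere Pt) (A B C D : Pt)
    (hABC : ¬ Collinear ℝ ({A, B, C} : Set Pt))
    (hA : A ∈ Γ) (hB : B ∈ Γ) (hC : C ∈ Γ) (hD : D ∉ Γ)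
    (Fa Fb Fc : Pt)
    (hFa : IsFoot D B C Fa) (hFb : IsFoot D C A Fb) (hFc : IsFoot D A B Fc) :
    ¬ Collinear ℝ ({Fa, Fb, Fc} : Set Pt) ∧
      ∃! E : EuclideanGeometry.Sphere Pt, Fa ∈ E ∧ Fb ∈ E ∧ Fc ∈ E := by
  have hr : Γ.radius ≠ 0 := fun h0 => ne₁₂_of_not_collinear hABC <| by
    rw [mem_sphere, h0, dist_eq_zero] at hA hB
    rw [hA, hB]
  have hrd : Γ.radius ^ 2 - Complex.normSq (complexCoord Γ.center D) ≠ 0 := by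
    rw [sub_ne_zero, Ne, ← Complex.ofReal_inj, ← Complex.mul_conj, complexCoord_mul_conj,
      Complex.ofReal_inj, sq_eq_sq₀ (Sphere.radius_nonneg_of_mem hA) dist_nonneg]
    exact fun h => hD (mem_sphere.2 h.symm)
  have harea := Complex.pedal_area_eq (complexCoord_center_mul_conj_of_mem hA)
    (complexCoord_center_mul_conj_of_mem hB) (complexCoord_center_mul_conj_of_mem hC)
    (hFa.two_mul_complexCoord hB hC (ne₂₃_of_not_collinear hABC))
    (hFb.two_mul_complexCoord hC hA (ne₁₃_of_not_collinear hABC).symm)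
    (hFc.two_mul_complexCoord hA hB (ne₁₂_of_not_collinear hABC))
  have hncol : ¬ Collinear ℝ ({Fa, Fb, Fc} : Set Pt) := by
    rw [collinear_iff_im_complexCoord Γ.center] at hABC ⊢
    intro hF
    rw [hF, mul_zero, eq_comm] at harea
    exact hABC ((mul_eq_zero.1 harea).resolve_left (mul_ne_zero (pow_ne_zero 2 hr) hrd))
  exact ⟨hncol, existsUnique_sphere_of_not_collinear finrank_euclideanSpace_fin hncol⟩

/-- Well-posedness of the pedal circle (Definition 2.1): for `D` off the circumcircle and the
side lines, the three pedal feet are noncollinear, so a unique circle passes through them. -/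
theorem pedal_feet_noncollinear
    (Γ : EuclideanGeometry.Sphere Pt) (A B C D : Pt)
    (hABC : ¬ Collinear ℝ ({A, B, C} : Set Pt))
    (hA : A ∈ Γ) (hB : B ∈ Γ) (hC : C ∈ Γ) (hD : D ∉ Γ)
    (hDa : D ∉ L B C) (hDb : D ∉ L C A) (hDc : D ∉ L A B)
    (Fa Fb Fc : Pt)
    (hFa : IsFoot D B C Fa) (hFb : IsFoot D C A Fb) (hFc : IsFoot D A B Fc) :
    ¬ Collinear ℝ ({Fa, Fb, Fc} : Set Pt) ∧
      ∃! E : EuclideanGeometry.Sphere Pt, Fa ∈ E ∧ Fb ∈ E ∧ Fc ∈ E :=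
  pedal_feet_noncollinear_general Γ A B C D hABC hA hB hC hD Fa Fb Fc hFa hFb hFc
end
end
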